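/- Let A and B be bounded linear operators on a complex Hilbert space H. Then max{‖ℑA − ℑB‖, ‖ℜA − ℜB‖} + max{‖ℜA + ℜB‖, ‖ℑA + ℑB‖} ≤ ‖A + B‖ + ‖A − B‖ ≤ 4ω([[O, A],[B*, O]]). -/

import Mathlib

open ContinuousLinearMap

/-- The numerical radius of a bounded operator on a complex inner product space:
`ω(T) = sup { |⟨Tx, x⟩| : ‖x‖ = 1 }`. -/
noncomputable def numRadius {E : Type*} [NormedAddCommGroup E] [InnerProductSpace ℂ E]
    (T : E →L[ℂ] E) : ℝ :=
  ⨆ x : { x : E // ‖x‖ = 1 }, ‖(inner ℂ (T x) (x : E) : ℂ)‖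

/-- The block operator `[[O, A], [B, O]]` on the Hilbert space direct sum `H ⊕₂ H`,
sending `(x, y)` to `(A y, B x)`. -/
noncomputable def blockOp {H : Type*} [NormedAddCommGroup H] [InnerProductSpace ℂ H]
    (A B : H →L[ℂ] H) : WithLp 2 (H × H) →L[ℂ] WithLp 2 (H × H) :=
  ((WithLp.prodContinuousLinearEquiv 2 ℂ H H).symm : (H × H) →L[ℂ] WithLp 2 (H × H)) ∘L
    ((A ∘L ContinuousLinearMap.snd ℂ H H).prod (B ∘L ContinuousLinearMap.fst ℂ H H)) ∘L
    ((WithLp.prodContinuousLinearEquiv 2 ℂ H H) : WithLp 2 (H × H) →L[ℂ] H × H)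

/-! For `T = A ± B` the triangle inequality and `‖T*‖ = ‖T‖` give `‖ℜT‖, ‖ℑT‖ ≤ ‖T‖`, which is
the first inequality. For the second, let `S = [[O, A], [B*, O]]`. For `z = (x, y)` one has
`⟪S z, z⟫ = ⟪A y, x⟫ + conj ⟪B y, x⟫`, whose real part is `re ⟪(A + B) y, x⟫` and whose imaginary
part is `im ⟪(A - B) y, x⟫`. Both are at most `ω(S) (‖x‖² + ‖y‖²) = 2 ω(S)` for unit `x`, `y`;
replacing `x` by `I • x` turns the imaginary part into a real part, so `‖A ± B‖ ≤ 2 ω(S)`. -/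
open ComplexConjugate

section StarParts

variable {𝕜 E : Type*} [NormedField 𝕜] [SeminormedAddCommGroup E] [NormedSpace 𝕜 E]
  [StarAddMonoid E] [NormedStarGroup E]

lemma norm_smul_add_star_le {c : 𝕜} (hc : ‖c‖ ≤ 2⁻¹) (a : E) : ‖c • (a + star a)‖ ≤ ‖a‖ :=
  calc ‖c • (a + star a)‖ ≤ 2⁻¹ * (‖a‖ + ‖star a‖) := by
        rw [norm_smul]; gcongr; exact norm_add_le _ _
    _ = ‖a‖ := by rw [norm_star]; ring

lemma norm_smul_sub_star_le {c : 𝕜} (hc : ‖c‖ ≤ 2⁻¹) (a : E) : ‖c • (a - star a)‖ ≤ ‖a‖ :=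
  calc ‖c • (a - star a)‖ ≤ 2⁻¹ * (‖a‖ + ‖star a‖) := by
        rw [norm_smul]; gcongr; exact norm_sub_le _ _
    _ = ‖a‖ := by rw [norm_star]; ring

end StarParts

section NumRadius

variable {E : Type*} [NormedAddCommGroup E] [InnerProductSpace ℂ E]

lemma numRadius_nonneg (T : E →L[ℂ] E) : 0 ≤ numRadius T :=
  Real.iSup_nonneg fun _ => norm_nonneg _

lemma norm_inner_self_le_numRadius (T : E →L[ℂ] E) {x : E} (hx : ‖x‖ = 1) :
    ‖inner ℂ (T x) x‖ ≤ numRadius T := by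
  refine le_ciSup (f := fun x : { x : E // ‖x‖ = 1 } => ‖inner ℂ (T x) (x : E)‖)
    ⟨‖T‖, ?_⟩ ⟨x, hx⟩
  rintro _ ⟨⟨y, hy⟩, rfl⟩
  calc ‖inner ℂ (T y) y‖ ≤ ‖T y‖ * ‖y‖ := norm_inner_le_norm _ _
    _ ≤ ‖T‖ * ‖y‖ * ‖y‖ := by gcongr; exact T.le_opNorm y
    _ = ‖T‖ := by simp [hy]

lemma norm_inner_self_le_numRadius_mul_sq (T : E →L[ℂ] E) (x : E) :
    ‖inner ℂ (T x) x‖ ≤ numRadius T * ‖x‖ ^ 2 := by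
  rcases eq_or_ne x 0 with rfl | hx
  · simp
  have hx' : ‖x‖ ≠ 0 := norm_ne_zero_iff.2 hx
  have hu : ‖((‖x‖⁻¹ : ℝ) : ℂ) • x‖ = 1 := by simp [norm_smul, hx']
  have := norm_inner_self_le_numRadius T hu
  simp only [map_smul, inner_smul_left, inner_smul_right, norm_mul, Complex.conj_ofReal,
    Complex.norm_real, norm_inv, norm_norm] at this
  rwa [← mul_assoc, ← mul_inv, ← sq, inv_mul_le_iff₀ (by positivity), mul_comm] at this

end NumRadius

section BlockOp

variable {H : Type*} [NormedAddCommGroup H] [InnerProductSpace ℂ H]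

lemma blockOp_inner_self (A C : H →L[ℂ] H) (z : WithLp 2 (H × H)) :
    inner ℂ (blockOp A C z) z = inner ℂ (A z.snd) z.fst + inner ℂ (C z.fst) z.snd := by
  simp [blockOp, WithLp.prod_inner_apply]

variable [CompleteSpace H]

lemma blockOp_adjoint_inner_toLp (A B : H →L[ℂ] H) (x y : H) :
    inner ℂ (blockOp A (adjoint B) (WithLp.toLp 2 (x, y))) (WithLp.toLp 2 (x, y)) =
      inner ℂ (A y) x + conj (inner ℂ (B y) x) := by
  rw [blockOp_inner_self, WithLp.toLp_fst, WithLp.toLp_snd, adjoint_inner_left, inner_conj_symm]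

lemma re_inner_add_le_numRadius_blockOp (A B : H →L[ℂ] H) (x y : H) :
    (inner ℂ ((A + B) y) x).re ≤ numRadius (blockOp A (adjoint B)) * (‖x‖ ^ 2 + ‖y‖ ^ 2) := by
  have h := norm_inner_self_le_numRadius_mul_sq (blockOp A (adjoint B)) (WithLp.toLp 2 (x, y))
  rw [blockOp_adjoint_inner_toLp, WithLp.prod_norm_sq_eq_of_L2] at h
  calc (inner ℂ ((A + B) y) x).re = (inner ℂ (A y) x + conj (inner ℂ (B y) x)).re := by
        rw [add_apply, inner_add_left, Complex.add_re, Complex.add_re, Complex.conj_re]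
    _ ≤ _ := (Complex.re_le_norm _).trans h

lemma im_inner_sub_le_numRadius_blockOp (A B : H →L[ℂ] H) (x y : H) :
    (inner ℂ ((A - B) y) x).im ≤ numRadius (blockOp A (adjoint B)) * (‖x‖ ^ 2 + ‖y‖ ^ 2) := by
  have h := norm_inner_self_le_numRadius_mul_sq (blockOp A (adjoint B)) (WithLp.toLp 2 (x, y))
  rw [blockOp_adjoint_inner_toLp, WithLp.prod_norm_sq_eq_of_L2] at h
  calc (inner ℂ ((A - B) y) x).im = (inner ℂ (A y) x + conj (inner ℂ (B y) x)).im := by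
        rw [sub_apply, inner_sub_left, Complex.sub_im, Complex.add_im, Complex.conj_im,
          sub_eq_add_neg]
    _ ≤ _ := (Complex.im_le_norm _).trans h

lemma norm_add_le_two_mul_numRadius_blockOp (A B : H →L[ℂ] H) :
    ‖A + B‖ ≤ 2 * numRadius (blockOp A (adjoint B)) := by
  refine opNorm_le_of_re_inner_le (mul_nonneg zero_le_two (numRadius_nonneg _))
    fun y x hy hx => ?_
  have h := re_inner_add_le_numRadius_blockOp A B x y
  rw [hx, hy] at h
  rw [RCLike.re_to_complex]
  linarith

lemma norm_sub_le_two_mul_numRadius_blockOp (A B : H →L[ℂ] H) :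
    ‖A - B‖ ≤ 2 * numRadius (blockOp A (adjoint B)) := by
  refine opNorm_le_of_re_inner_le (mul_nonneg zero_le_two (numRadius_nonneg _))
    fun y x hy hx => ?_
  have h := im_inner_sub_le_numRadius_blockOp A B (Complex.I • x) y
  rw [inner_smul_right, Complex.I_mul_im, norm_smul, Complex.norm_I, one_mul, hx, hy] at h
  rw [RCLike.re_to_complex]
  linarith

end BlockOp

/-- `max{‖ℑA−ℑB‖, ‖ℜA−ℜB‖} + max{‖ℜA+ℜB‖, ‖ℑA+ℑB‖} ≤ ‖A+B‖ + ‖A−B‖ ≤ 4ω([[O,A],[B*,O]])`. -/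
theorem stmt_19 {H : Type*} [NormedAddCommGroup H] [InnerProductSpace ℂ H] [CompleteSpace H]
    (A B : H →L[ℂ] H) :
    max ‖(2 * Complex.I)⁻¹ • (A - adjoint A) - (2 * Complex.I)⁻¹ • (B - adjoint B)‖
          ‖(2 : ℂ)⁻¹ • (A + adjoint A) - (2 : ℂ)⁻¹ • (B + adjoint B)‖ +
        max ‖(2 : ℂ)⁻¹ • (A + adjoint A) + (2 : ℂ)⁻¹ • (B + adjoint B)‖
          ‖(2 * Complex.I)⁻¹ • (A - adjoint A) + (2 * Complex.I)⁻¹ • (B - adjoint B)‖ ≤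
        ‖A + B‖ + ‖A - B‖ ∧
      ‖A + B‖ + ‖A - B‖ ≤ 4 * numRadius (blockOp A (adjoint B)) := by
  have hre : ‖(2 : ℂ)⁻¹‖ ≤ 2⁻¹ := by simp
  have him : ‖(2 * Complex.I)⁻¹‖ ≤ 2⁻¹ := by simp
  refine ⟨?_, by linarith [norm_add_le_two_mul_numRadius_blockOp A B,
    norm_sub_le_two_mul_numRadius_blockOp A B]⟩
  simp only [← star_eq_adjoint]
  rw [add_comm ‖A + B‖]
  refine add_le_add (max_le ?_ ?_) (max_le ?_ ?_)
  · refine le_of_eq_of_le (congrArg norm ?_) (norm_smul_sub_star_le him (A - B))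
    rw [star_sub]; module
  · refine le_of_eq_of_le (congrArg norm ?_) (norm_smul_add_star_le hre (A - B))
    rw [star_sub]; module
  · refine le_of_eq_of_le (congrArg norm ?_) (norm_smul_add_star_le hre (A + B))
    rw [star_add]; module
  · refine le_of_eq_of_le (congrArg norm ?_) (norm_smul_sub_star_le him (A + B))
    rw [star_add]; module
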